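/- Let X be a closed orientable topological manifold of dimension n with H_{r−1}(X;ℤ) a free abelian group, and let E be a real oriented vector bundle of fibre dimension r over X with non-trivial Euler class e(E) ≠ 0 ∈ H^r(X;ℤ). Then for any bundle endomorphism L : E → E which is orientation reversing over X∖Σ(L) (i.e. the pullback j*L : j*E → j*E over j : X∖Σ(L) ↪ X reverses the orientation), the covering dimension of Σ(L) is at least n − r. -/

import Mathlib

set_option autoImplicit false

noncomputable section

open Bundle Set Module

/-- `HasCovDimLE Y m` : every finite open cover of `Y` has a finite open refinement in which
no point is included in more than `m + 1` elements. -/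
def HasCovDimLE (Y : Type) [TopologicalSpace Y] (m : ℕ) : Prop :=
  ∀ U : Finset (Set Y), (∀ u ∈ U, IsOpen u) → ⋃₀ (U : Set (Set Y)) = Set.univ →
    ∃ V : Finset (Set Y), (∀ v ∈ V, IsOpen v) ∧ ⋃₀ (V : Set (Set Y)) = Set.univ ∧
      (∀ v ∈ V, ∃ u ∈ U, v ⊆ u) ∧
      ∀ y : Y, {v ∈ (V : Set (Set Y)) | y ∈ v}.ncard ≤ m + 1

/-- The covering dimension of a topological space, as an element of `ℕ∞` (`⊤` if no finite
`m` works). -/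
def covDim (Y : Type) [TopologicalSpace Y] : ℕ∞ :=
  sInf {d : ℕ∞ | ∃ m : ℕ, d = (m : ℕ∞) ∧ HasCovDimLE Y m}

/-- The underlying graded groups of: relative singular homology `H_k(Y, A; R)` (with
`H_k(Y; R) = H_k(Y, ∅; R)`), singular cohomology `H^k(Y; G)`, Čech cohomology `Ȟ^k(Y; R)`
and the `Ext`-term `Ext¹_R(H_{k-1}(Y; R), G)` of the universal coefficient theorem. -/
structure CohomologyData (R : Type) [CommRing R] (G : Type) [AddCommGroup G] [Module R G] where
  /-- relative singular homology `H_k(Y, A; R)` -/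
  Hrel : ∀ (Y : Type) [TopologicalSpace Y], Set Y → ℤ → Type
  instHrelAdd : ∀ (Y : Type) [TopologicalSpace Y] (A : Set Y) (k : ℤ), AddCommGroup (Hrel Y A k)
  instHrelMod : ∀ (Y : Type) [TopologicalSpace Y] (A : Set Y) (k : ℤ), Module R (Hrel Y A k)
  /-- singular cohomology `H^k(Y; G)` -/
  Hco : ∀ (Y : Type) [TopologicalSpace Y], ℤ → Type
  instHcoAdd : ∀ (Y : Type) [TopologicalSpace Y] (k : ℤ), AddCommGroup (Hco Y k)
  /-- Čech cohomology `Ȟ^k(Y; R)` -/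
  Hcech : ∀ (Y : Type) [TopologicalSpace Y], ℤ → Type
  instHcechAdd : ∀ (Y : Type) [TopologicalSpace Y] (k : ℤ), AddCommGroup (Hcech Y k)
  /-- the group `Ext¹_R(H_{k-1}(Y; R), G)` appearing in the universal coefficient theorem -/
  ExtUCT : ∀ (Y : Type) [TopologicalSpace Y], ℤ → Type
  instExtAdd : ∀ (Y : Type) [TopologicalSpace Y] (k : ℤ), AddCommGroup (ExtUCT Y k)

attribute [instance] CohomologyData.instHrelAdd CohomologyData.instHrelMod
  CohomologyData.instHcoAdd CohomologyData.instHcechAdd CohomologyData.instExtAdd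

/-- An axiomatization of the package consisting of singular homology of pairs (with
coefficients in a PID `R`), singular cohomology (with coefficients in an `R`-module `G`) and
Čech cohomology (with coefficients in `R`), together with: functoriality, the Kronecker
pairing `α` (written `pair`, `α^k(η)(ξ) = ⟨η, ξ⟩`) and its naturality, the universal
coefficient exact sequence
`0 → Ext¹_R(H_{k-1}(Y;R), G) →^{β^k} H^k(Y;G) →^{α^k} Hom_R(H_k(Y;R), G) → 0`
(exactness at `H^k` and vanishing of the `Ext`-term on free homology), the homology long
exact sequence of a pair (the part `im j_* = ker π_*`), and the fact that non-vanishing of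
`Ȟ^m` of a compact Hausdorff space forces its covering dimension to be at least `m`.
All of these are classical facts about the (co)homology of topological spaces; they are the
only properties used in the paper. -/
structure Theory (R : Type) [CommRing R] [IsDomain R] [IsPrincipalIdealRing R]
    (G : Type) [AddCommGroup G] [Module R G] extends CohomologyData R G where
  /-- functoriality of relative homology for maps of pairs -/
  hmap : ∀ {Y Z : Type} [TopologicalSpace Y] [TopologicalSpace Z]
    (f : C(Y, Z)) {A : Set Y} {B : Set Z}, Set.MapsTo f A B →
    ∀ k : ℤ, Hrel Y A k →ₗ[R] Hrel Z B k
  /-- contravariant functoriality of singular cohomology -/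
  cmap : ∀ {Y Z : Type} [TopologicalSpace Y] [TopologicalSpace Z]
    (f : C(Y, Z)) (k : ℤ), Hco Z k →+ Hco Y k
  cmap_id : ∀ (Y : Type) [TopologicalSpace Y] (k : ℤ) (x : Hco Y k),
    cmap (ContinuousMap.id Y) k x = x
  /-- contravariant functoriality of Čech cohomology -/
  ccmap : ∀ {Y Z : Type} [TopologicalSpace Y] [TopologicalSpace Z]
    (f : C(Y, Z)) (k : ℤ), Hcech Z k →+ Hcech Y k
  /-- the Kronecker pairing `α^k : H^k(Y;G) → Hom_R(H_k(Y;R), G)`, `α^k(η)(ξ) = ⟨η, ξ⟩` -/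
  pair : ∀ (Y : Type) [TopologicalSpace Y] (k : ℤ),
    Hco Y k →+ (Hrel Y (∅ : Set Y) k →ₗ[R] G)
  /-- naturality of the Kronecker pairing: `⟨f^*η, ξ⟩ = ⟨η, f_*ξ⟩` -/
  pair_natural : ∀ {Y Z : Type} [TopologicalSpace Y] [TopologicalSpace Z] (f : C(Y, Z)) (k : ℤ)
    (η : Hco Z k) (ξ : Hrel Y (∅ : Set Y) k),
    pair Y k (cmap f k η) ξ = pair Z k η (hmap f (Set.mapsTo_empty _ _) k ξ)
  /-- the map `β^k : Ext¹_R(H_{k-1}(Y;R), G) → H^k(Y;G)` of the universal coefficient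
  theorem -/
  betaMap : ∀ (Y : Type) [TopologicalSpace Y] (k : ℤ), ExtUCT Y k →+ Hco Y k
  /-- exactness of the universal coefficient sequence at `H^k(Y;G)`: `ker α^k = im β^k` -/
  uct_exact : ∀ (Y : Type) [TopologicalSpace Y] (k : ℤ) (x : Hco Y k),
    pair Y k x = 0 ↔ x ∈ Set.range (betaMap Y k)
  /-- `Ext¹_R(H_{k-1}(Y;R), G)` vanishes if `H_{k-1}(Y;R)` is a free `R`-module -/
  uct_free : ∀ (Y : Type) [TopologicalSpace Y] (k : ℤ),
    Module.Free R (Hrel Y (∅ : Set Y) (k - 1)) → ∀ z : ExtUCT Y k, betaMap Y k z = 0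
  /-- exactness of the long exact homology sequence of the pair `(X, X ∖ A)` at `H_k(X)`:
  `π_* ξ = 0` iff `ξ` comes from `H_k(X ∖ A)` -/
  les_exact : ∀ (X : Type) [TopologicalSpace X] (A : Set X) (k : ℤ)
    (ξ : Hrel X (∅ : Set X) k),
    hmap (ContinuousMap.id X) (Set.mapsTo_empty _ _) k ξ = (0 : Hrel X Aᶜ k) ↔
      ∃ ζ : Hrel (↥(Aᶜ)) (∅ : Set ↥(Aᶜ)) k,
        hmap (⟨Subtype.val, continuous_subtype_val⟩ : C(↥(Aᶜ), X))
          (Set.mapsTo_empty _ _) k ζ = ξ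
  /-- if the Čech cohomology `Ȟ^m(Y;R)` of a compact Hausdorff space is non-trivial
  then its covering dimension is at least `m` -/
  dim_cech : ∀ (Y : Type) [TopologicalSpace Y] [CompactSpace Y] [T2Space Y] (m : ℕ),
    (∃ x : Hcech Y (m : ℤ), x ≠ 0) → (m : ℕ∞) ≤ covDim Y

/-- `X` is `R`-orientable (with respect to the homology theory `T`) if there is a compatible
continuous choice `o(λ)` of generators of the local homology modules
`H_n(X, X ∖ {λ}; R) ≅ R`: i.e. an open cover `{U_i}` of `X` and classes
`μ_i ∈ H_n(X, X ∖ U_i; R)` restricting to `o(λ)` for every `λ ∈ U_i`. -/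
def ROrientable {R : Type} [CommRing R] [IsDomain R] [IsPrincipalIdealRing R]
    {G : Type} [AddCommGroup G] [Module R G] (T : Theory R G)
    (n : ℕ) (X : Type) [TopologicalSpace X] : Prop :=
  ∃ o : ∀ x : X, T.Hrel X ({x}ᶜ) (n : ℤ),
    (∀ x, Submodule.span R {o x} = ⊤) ∧
    ∃ (ι : Type) (U : ι → Set X), (∀ i, IsOpen (U i)) ∧ (∀ x, ∃ i, x ∈ U i) ∧
      ∃ μ : ∀ i, T.Hrel X ((U i)ᶜ) (n : ℤ),
        ∀ (i) (x) (hx : x ∈ U i),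
          T.hmap (ContinuousMap.id X)
            ((Set.mapsTo_id _).mono_right
              (Set.compl_subset_compl.mpr (Set.singleton_subset_iff.mpr hx)))
            (n : ℤ) (μ i) = o x

/-- The full package: the (co)homology theories together with Poincaré–Lefschetz duality for
closed `R`-orientable topological `n`-manifolds (in the form of [Bredon, Cor. VI.8.4]: for a
closed subset `A ⊆ X` there is a commutative square consisting of the duality isomorphisms
`Ȟ^{n-k}(X;R) ≅ H_k(X;R)` and `Ȟ^{n-k}(A;R) ≅ H_k(X, X∖A;R)`, the restriction
`i^* : Ȟ^{n-k}(X;R) → Ȟ^{n-k}(A;R)` and `π_* : H_k(X;R) → H_k(X, X∖A;R)`), and the fact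
that every closed topological manifold is `R`-orientable when `2 = 0` in `R`. -/
structure GoodTheory (R : Type) [CommRing R] [IsDomain R] [IsPrincipalIdealRing R]
    (G : Type) [AddCommGroup G] [Module R G] extends Theory R G where
  /-- Poincaré–Lefschetz duality -/
  pd : ∀ (n : ℕ) (X : Type) [TopologicalSpace X] [T2Space X]
    [ChartedSpace (EuclideanSpace ℝ (Fin n)) X] [CompactSpace X],
    ROrientable toTheory n X →
    ∀ (k : ℤ) (A : Set X), IsClosed A →
      ∃ (pdX : Hcech X ((n : ℤ) - k) ≃+ Hrel X (∅ : Set X) k)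
        (pdA : Hcech (↥A) ((n : ℤ) - k) ≃+ Hrel X Aᶜ k),
        ∀ η : Hcech X ((n : ℤ) - k),
          pdA (ccmap (⟨Subtype.val, continuous_subtype_val⟩ : C(↥A, X)) ((n : ℤ) - k) η) =
          hmap (ContinuousMap.id X) (Set.mapsTo_empty _ _) k (pdX η)
  /-- every closed topological manifold is `R`-orientable if `2 = 0` in `R` -/
  orient_two : (2 : R) = 0 → ∀ (n : ℕ) (X : Type) [TopologicalSpace X] [T2Space X]
    [ChartedSpace (EuclideanSpace ℝ (Fin n)) X] [CompactSpace X],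
    ROrientable toTheory n X

/-- A (finite rank) vector bundle over the base `Y` with scalar field `𝕜`, packaged as a
structure: a model fibre `F` and a family of fibres `E y` together with all the data making
it a topological vector bundle. -/
structure VB (𝕜 : Type) [NontriviallyNormedField 𝕜] (Y : Type) [TopologicalSpace Y] :
    Type 1 where
  /-- the model fibre -/
  F : Type
  [nF : NormedAddCommGroup F]
  [sF : NormedSpace 𝕜 F]
  [fdF : FiniteDimensional 𝕜 F]
  /-- the fibres -/
  E : Y → Type
  [aE : ∀ y, AddCommGroup (E y)]
  [mE : ∀ y, Module 𝕜 (E y)]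
  [tE : ∀ y, TopologicalSpace (E y)]
  [tT : TopologicalSpace (Bundle.TotalSpace F E)]
  [fb : FiberBundle F E]
  [vb : VectorBundle 𝕜 F E]

attribute [instance] VB.nF VB.sF VB.fdF VB.aE VB.mE VB.tE VB.tT VB.fb VB.vb

/-- A morphism of vector bundles over `X`: a fibrewise (continuous) linear map which is
continuous as a map of total spaces. -/
def IsBundleMorphism {𝕜 : Type} [NontriviallyNormedField 𝕜] {X : Type} [TopologicalSpace X]
    (V W : VB 𝕜 X) (L : ∀ x, V.E x →L[𝕜] W.E x) : Prop :=
  Continuous fun p : Bundle.TotalSpace V.F V.E =>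
    (Bundle.TotalSpace.mk p.1 (L p.1 p.2) : Bundle.TotalSpace W.F W.E)

/-- The singular set `Σ(L) = {λ ∈ X | L_λ ∉ GL(E_λ, F_λ)}` of a bundle morphism `L`:
the set of points of the base over which `L` is not a linear isomorphism of fibres. -/
def singularSet {𝕜 : Type} [NontriviallyNormedField 𝕜] {X : Type} [TopologicalSpace X]
    (V W : VB 𝕜 X) (L : ∀ x, V.E x →L[𝕜] W.E x) : Set X :=
  {x : X | ¬ Function.Bijective (L x)}

/-- `o` is an orientation of the real vector bundle `V` of rank `r`: a function assigning an
orientation to each fibre in such a way that near each point of the base the local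
trivialization carries the orientations of the fibres into one fixed orientation of the
model fibre. -/
def IsBundleOrientation {Y : Type} [TopologicalSpace Y] (r : ℕ) (V : VB ℝ Y)
    (o : ∀ y, Orientation ℝ (V.E y) (Fin r)) : Prop :=
  ∀ y₀ : Y, ∃ ω : Orientation ℝ V.F (Fin r),
    ∀ (y) (hy : y ∈ (trivializationAt V.F V.E y₀).baseSet),
      Orientation.map (Fin r)
        ((trivializationAt V.F V.E y₀).continuousLinearEquivAt ℝ y hy).toLinearEquiv
        (o y) = ω

/-- A real vector bundle is orientable if it admits an orientation. -/
def BundleOrientable {Y : Type} [TopologicalSpace Y] (V : VB ℝ Y) : Prop :=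
  ∃ o : ∀ y, Orientation ℝ (V.E y) (Fin (Module.finrank ℝ V.F)),
    IsBundleOrientation (Module.finrank ℝ V.F) V o

/-- An oriented real vector bundle of rank `r` over `Y`. -/
structure OVB (Y : Type) [TopologicalSpace Y] (r : ℕ) extends VB ℝ Y where
  /-- the fibrewise orientation -/
  ori : ∀ y, Orientation ℝ (E y) (Fin r)
  isOri : IsBundleOrientation r toVB ori

/-- A bundle morphism `L : E → F` between oriented bundles is orientation preserving if
`Σ(L) ≠ X` and its restriction over `X ∖ Σ(L)` carries the orientation of `E` to the
orientation of `F` on each fibre. -/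
def IsOrientPreservingMorphism {X : Type} [TopologicalSpace X] {r : ℕ}
    (V W : OVB X r) (L : ∀ x, V.E x →L[ℝ] W.E x) : Prop :=
  singularSet V.toVB W.toVB L ≠ Set.univ ∧
  ∀ (x) (hx : Function.Bijective (L x)),
    Orientation.map (Fin r)
      (LinearEquiv.ofBijective ((L x : V.E x →ₗ[ℝ] W.E x)) hx) (V.ori x) = W.ori x

/-- An `H^k(·;G)`-valued characteristic class for oriented (rank `r`) real bundles: it
assigns to every oriented bundle over a base `Y` a class `e(E) ∈ H^k(Y;G)`, such that
`e(E₁) = f^* e(E₂)` whenever a continuous map `f : Y → Z` is covered by an orientation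
preserving (fibrewise isomorphic, continuous) bundle map `E₁ → E₂`. -/
structure OrientedCharClass {R : Type} [CommRing R] [IsDomain R] [IsPrincipalIdealRing R]
    {G : Type} [AddCommGroup G] [Module R G] (T : GoodTheory R G) (r : ℕ) (k : ℤ) where
  /-- the value of the characteristic class on an oriented bundle -/
  cls : ∀ (Y : Type) [TopologicalSpace Y], OVB Y r → T.Hco Y k
  /-- naturality with respect to orientation preserving bundle maps covering continuous
  maps -/
  natural : ∀ (Y Z : Type) [TopologicalSpace Y] [TopologicalSpace Z]
    (V : OVB Y r) (W : OVB Z r) (f : C(Y, Z)) (φ : ∀ y, V.E y ≃ₗ[ℝ] W.E (f y)),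
    Continuous (fun p : Bundle.TotalSpace V.F V.E =>
      (Bundle.TotalSpace.mk (f p.1) (φ p.1 p.2) : Bundle.TotalSpace W.F W.E)) →
    (∀ y, Orientation.map (Fin r) (φ y) (V.ori y) = W.ori (f y)) →
    cls Y V = T.cmap f k (cls Z W)

/-!
Over `X ∖ Σ(L)` the map `L` is an orientation reversing isomorphism `E ≅ -E`, so the
restriction of `2 e(E) = e(E) - e(-E)` to `X ∖ Σ(L)` vanishes. As `H_{r-1}(X)` is free,
`H^r(X;ℤ)` is detected by the Kronecker pairing and torsion-free, so some `ξ ∈ H_r(X)` pairs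
non-trivially with `2 e(E)`. Then `ξ` does not come from `X ∖ Σ(L)`, i.e. it survives in
`H_r(X, X ∖ Σ(L)) ≅ Ȟ^{n-r}(Σ(L))` (Poincaré–Lefschetz duality), and a non-zero `Ȟ^{n-r}`
forces `dim Σ(L) ≥ n - r`.
-/

section SingularSet

open ContinuousLinearMap

variable {𝕜 : Type} [NontriviallyNormedField 𝕜] {X : Type} [TopologicalSpace X]

theorem isOpen_setOf_bijective {E F : Type} [NormedAddCommGroup E] [NormedSpace 𝕜 E]
    [CompleteSpace E] [NormedAddCommGroup F] [NormedSpace 𝕜 F] [CompleteSpace F] :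
    IsOpen {f : E →L[𝕜] F | Function.Bijective f} := by
  convert ContinuousLinearEquiv.isOpen (𝕜 := 𝕜) (E := E) (F := F) using 1
  ext f
  refine ⟨fun hf => ⟨.ofBijective f (LinearMap.ker_eq_bot.2 hf.1)
    (LinearMap.range_eq_top.2 hf.2), ContinuousLinearEquiv.coe_ofBijective _ _ _⟩, ?_⟩
  rintro ⟨g, rfl⟩
  exact g.bijective

theorem IsBundleMorphism.continuousOn_inCoordinates [CompleteSpace 𝕜] {V W : VB 𝕜 X}
    {L : ∀ x, V.E x →L[𝕜] W.E x} (hL : IsBundleMorphism V W L) (x₀ : X) :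
    ContinuousOn (fun x => inCoordinates V.F V.E W.F W.E x₀ x x₀ x (L x))
      ((trivializationAt V.F V.E x₀).baseSet ∩ (trivializationAt W.F W.E x₀).baseSet) := by
  set tV := trivializationAt V.F V.E x₀
  set tW := trivializationAt W.F W.E x₀
  rw [continuousOn_clm_apply]
  intro v
  have hsection : ContinuousOn (fun x => TotalSpace.mk' V.F x (tV.symm x v)) tV.baseSet :=
    tV.continuousOn_symm.comp (continuous_id.prodMk continuous_const).continuousOn
      fun x hx => ⟨hx, mem_univ v⟩
  have himage : ContinuousOn (fun x => (tW ⟨x, L x (tV.symm x v)⟩).2)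
      (tV.baseSet ∩ tW.baseSet) :=
    continuous_snd.comp_continuousOn <| tW.continuousOn.comp
      (hL.comp_continuousOn (hsection.mono inter_subset_left))
      fun x hx => tW.mem_source.2 hx.2
  refine himage.congr fun x hx => ?_
  simp only [inCoordinates_eq hx.1 hx.2, coe_comp, ContinuousLinearEquiv.coe_coe,
    Function.comp_apply, tW.apply_eq_prod_continuousLinearEquivAt 𝕜 x hx.2,
    Trivialization.continuousLinearEquivAt_symm_apply]
  rfl

theorem bijective_inCoordinates_iff {V W : VB 𝕜 X} {x₀ x : X} (f : V.E x →L[𝕜] W.E x)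
    (hV : x ∈ (trivializationAt V.F V.E x₀).baseSet)
    (hW : x ∈ (trivializationAt W.F W.E x₀).baseSet) :
    Function.Bijective (inCoordinates V.F V.E W.F W.E x₀ x x₀ x f) ↔
      Function.Bijective f := by
  rw [inCoordinates_eq hV hW, coe_comp, coe_comp, ContinuousLinearEquiv.coe_coe,
    ContinuousLinearEquiv.coe_coe,
    Function.Bijective.of_comp_iff' (ContinuousLinearEquiv.bijective _),
    Function.Bijective.of_comp_iff _ (ContinuousLinearEquiv.bijective _)]

theorem IsBundleMorphism.isClosed_singularSet [CompleteSpace 𝕜] {V W : VB 𝕜 X}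
    {L : ∀ x, V.E x →L[𝕜] W.E x} (hL : IsBundleMorphism V W L) :
    IsClosed (singularSet V W L) := by
  rw [singularSet, ← isOpen_compl_iff, isOpen_iff_mem_nhds]
  intro x₀ hx₀
  set U := (trivializationAt V.F V.E x₀).baseSet ∩ (trivializationAt W.F W.E x₀).baseSet
  have hUopen : IsOpen U := (trivializationAt V.F V.E x₀).open_baseSet.inter
    (trivializationAt W.F W.E x₀).open_baseSet
  have hx₀U : x₀ ∈ U :=
    ⟨mem_baseSet_trivializationAt _ _ _, mem_baseSet_trivializationAt _ _ _⟩
  have := FiniteDimensional.complete 𝕜 V.F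
  have := FiniteDimensional.complete 𝕜 W.F
  have hnhds := (hL.continuousOn_inCoordinates x₀).isOpen_inter_preimage hUopen
    isOpen_setOf_bijective
  refine Filter.mem_of_superset (hnhds.mem_nhds ⟨hx₀U, ?_⟩) fun x ⟨hxU, hx⟩ => ?_
  · exact (bijective_inCoordinates_iff _ hx₀U.1 hx₀U.2).2 (not_not.1 hx₀)
  · exact not_not.2 ((bijective_inCoordinates_iff _ hxU.1 hxU.2).1 hx)

end SingularSet

section Orientation

variable {X Y : Type} [TopologicalSpace X] [TopologicalSpace Y] {r : ℕ}

theorem IsBundleOrientation.neg {V : VB ℝ Y} {o : ∀ y, Orientation ℝ (V.E y) (Fin r)}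
    (h : IsBundleOrientation r V o) : IsBundleOrientation r V (fun y => -(o y)) := by
  intro y₀
  obtain ⟨ω, hω⟩ := h y₀
  exact ⟨-ω, fun y hy => by rw [Orientation.map_neg, hω y hy]⟩

def OVB.neg (V : OVB Y r) : OVB Y r := ⟨V.toVB, fun y => -(V.ori y), V.isOri.neg⟩

@[reducible] def VB.pull (V : VB ℝ X) (j : C(Y, X)) : VB ℝ Y where
  F := V.F
  E := ⇑j *ᵖ V.E
  aE := fun y => V.aE (j y)
  mE := fun y => V.mE (j y)
  tE := fun y => V.tE (j y)
  fb := FiberBundle.pullback j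
  vb := VectorBundle.pullback (F := V.F) (E := V.E) ℝ j

theorem IsBundleOrientation.pull {V : VB ℝ X} {o : ∀ x, Orientation ℝ (V.E x) (Fin r)}
    (h : IsBundleOrientation r V o) (j : C(Y, X)) :
    IsBundleOrientation r (V.pull j) (fun y => o (j y)) := by
  intro y₀
  obtain ⟨ω, hω⟩ := h (j y₀)
  refine ⟨ω, fun y hy => ?_⟩
  rw [← hω (j y) hy]
  -- the trivialization of `j^*E` at `y₀` is the pullback of that of `E` at `j y₀`
  congr 2
  exact LinearEquiv.ext fun v => rfl

def OVB.pull (V : OVB X r) (j : C(Y, X)) : OVB Y r :=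
  ⟨V.toVB.pull j, fun y => V.ori (j y), V.isOri.pull j⟩

theorem IsBundleMorphism.pull {V : VB ℝ X} {L : ∀ x, V.E x →L[ℝ] V.E x}
    (hL : IsBundleMorphism V V L) (j : C(Y, X)) :
    IsBundleMorphism (V.pull j) (V.pull j) (fun y => L (j y)) :=
  (inducing_pullbackTotalSpaceEmbedding V.F V.E j).continuous_iff.2 <|
    (Pullback.continuous_proj V.F V.E j).prodMk (hL.comp (Pullback.continuous_lift V.F V.E j))

end Orientation

section CharClass

variable {R : Type} [CommRing R] [IsDomain R] [IsPrincipalIdealRing R] {G : Type}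
  [AddCommGroup G] [Module R G] {T : GoodTheory R G} {r : ℕ} {k : ℤ}
  (e : OrientedCharClass T r k) {X Y : Type} [TopologicalSpace X] [TopologicalSpace Y]

theorem OrientedCharClass.cls_pull (V : OVB X r) (j : C(Y, X)) :
    e.cls Y (V.pull j) = T.cmap j k (e.cls X V) :=
  e.natural _ _ _ V j (fun y => LinearEquiv.refl ℝ _) (Pullback.continuous_lift V.F V.E j)
    fun y => by
      show Orientation.map (Fin r) (LinearEquiv.refl ℝ (V.E (j y))) (V.ori (j y)) = _
      rw [Orientation.map_refl]
      rfl

theorem OrientedCharClass.cls_eq_cls_neg {V : OVB Y r} {L : ∀ y, V.E y →L[ℝ] V.E y}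
    (hL : IsBundleMorphism V.toVB V.toVB L) (hbij : ∀ y, Function.Bijective (L y))
    (hLrev : ∀ y, Orientation.map (Fin r) (LinearEquiv.ofBijective (L y : V.E y →ₗ[ℝ] V.E y)
      (hbij y)) (V.ori y) = -(V.ori y)) :
    e.cls Y V = e.cls Y V.neg := by
  rw [e.natural _ _ V V.neg (.id Y) (fun y => .ofBijective _ (hbij y)) hL hLrev, T.cmap_id]

theorem OrientedCharClass.cmap_cls_eq_cmap_cls_neg {V : OVB X r} {L : ∀ x, V.E x →L[ℝ] V.E x}
    (hL : IsBundleMorphism V.toVB V.toVB L)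
    (hLrev : ∀ (x) (hx : Function.Bijective (L x)),
      Orientation.map (Fin r) (LinearEquiv.ofBijective (L x : V.E x →ₗ[ℝ] V.E x) hx)
        (V.ori x) = -(V.ori x))
    (j : C(Y, X)) (hj : ∀ y, Function.Bijective (L (j y))) :
    T.cmap j k (e.cls X V) = T.cmap j k (e.cls X V.neg) := by
  rw [← e.cls_pull, ← e.cls_pull]
  exact e.cls_eq_cls_neg (hL.pull j) hj fun y => hLrev (j y) (hj y)

end CharClass

section Homology

variable {R : Type} [CommRing R] [IsDomain R] [IsPrincipalIdealRing R] {G : Type}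
  [AddCommGroup G] [Module R G] {X : Type} [TopologicalSpace X]

theorem Theory.pair_injective (T : Theory R G) {k : ℤ}
    (hfree : Module.Free R (T.Hrel X ∅ (k - 1))) : Function.Injective (T.pair X k) :=
  (injective_iff_map_eq_zero _).2 fun x hx => by
    obtain ⟨z, rfl⟩ := (T.uct_exact X k x).1 hx
    exact T.uct_free X k hfree z

/-- By naturality of the pairing `ξ` does not come from `X ∖ A`; exactness does the rest. -/
theorem Theory.hmap_ne_zero_of_pair_ne_zero (T : Theory R G) {A : Set X} {k : ℤ}
    {η : T.Hco X k}
    (hη : T.cmap (⟨Subtype.val, continuous_subtype_val⟩ : C(↥Aᶜ, X)) k η = 0)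
    {ξ : T.Hrel X ∅ k} (hξ : T.pair X k η ξ ≠ 0) :
    T.hmap (ContinuousMap.id X) (Set.mapsTo_empty _ _) k ξ ≠ (0 : T.Hrel X Aᶜ k) := by
  intro h0
  obtain ⟨ζ, rfl⟩ := (T.les_exact X A k ξ).1 h0
  rw [← T.pair_natural, hη, map_zero, LinearMap.zero_apply] at hξ
  exact hξ rfl

theorem GoodTheory.le_covDim_of_hmap_ne_zero (T : GoodTheory R G) {n : ℕ} [T2Space X]
    [ChartedSpace (EuclideanSpace ℝ (Fin n)) X] [CompactSpace X]
    (hor : ROrientable T.toTheory n X)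
    {A : Set X} (hA : IsClosed A) {k : ℕ} (hkn : k ≤ n) {ξ : T.Hrel X ∅ k}
    (hξ : T.hmap (ContinuousMap.id X) (Set.mapsTo_empty _ _) k ξ ≠ (0 : T.Hrel X Aᶜ k)) :
    ((n - k : ℕ) : ℕ∞) ≤ covDim A := by
  obtain ⟨pdX, pdA, hcomm⟩ := T.pd n X hor k A hA
  have : CompactSpace A := isCompact_iff_compactSpace.1 hA.isCompact
  refine T.dim_cech A (n - k) ?_
  rw [show ((n - k : ℕ) : ℤ) = n - k by omega]
  refine ⟨T.ccmap ⟨Subtype.val, continuous_subtype_val⟩ _ (pdX.symm ξ), fun h0 => hξ ?_⟩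
  rw [← pdX.apply_symm_apply ξ, ← hcomm, h0, map_zero]

end Homology

/-- Let `X` be a closed orientable topological manifold of dimension `n`
with `H_{r-1}(X;ℤ)` a free abelian group, and let `E` be a real oriented vector bundle of
fibre dimension `r` over `X` with non-trivial Euler class `e(E) ≠ 0 ∈ H^r(X;ℤ)`. Then for
any bundle endomorphism `L : E → E` which is orientation reversing over `X ∖ Σ(L)`, the
covering dimension of `Σ(L)` is at least `n - r`.
(The Euler class is represented by an `H^r(·;ℤ)`-valued characteristic class `e` for
oriented rank-`r` bundles satisfying `e(-E) = -e(E)`, where `-E` denotes `E` with the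
reversed orientation; these are the only properties of the Euler class used.) -/
theorem covDim_ge_of_euler
    (T : GoodTheory ℤ ℤ)
    (n : ℕ) (X : Type) [TopologicalSpace X] [T2Space X]
    [ChartedSpace (EuclideanSpace ℝ (Fin n)) X] [CompactSpace X]
    (hor : ROrientable T.toTheory n X)
    (r : ℕ) (hfree : Module.Free ℤ (T.Hrel X (∅ : Set X) ((r : ℤ) - 1)))
    (V : OVB X r)
    (e : OrientedCharClass T r (r : ℤ))
    (hrev : ∀ h : IsBundleOrientation r V.toVB (fun x => -(V.ori x)),
      e.cls X ⟨V.toVB, fun x => -(V.ori x), h⟩ = - e.cls X V)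
    (he : e.cls X V ≠ 0)
    (L : ∀ x, V.E x →L[ℝ] V.E x) (hL : IsBundleMorphism V.toVB V.toVB L)
    (hLrev : ∀ (x) (hx : Function.Bijective (L x)),
      Orientation.map (Fin r)
        (LinearEquiv.ofBijective ((L x : V.E x →ₗ[ℝ] V.E x)) hx) (V.ori x) = -(V.ori x)) :
    ((n - r : ℕ) : ℕ∞) ≤ covDim ↥(singularSet V.toVB V.toVB L) := by
  rcases lt_or_ge n r with hnr | hrn
  · simp [Nat.sub_eq_zero_of_le hnr.le]
  -- `hfree` refers to the canonical `ℤ`-module structure, not to `T.instHrelMod`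
  have hpair := T.pair_injective
    (Subsingleton.elim (AddCommGroup.toIntModule _) (T.instHrelMod X ∅ _) ▸ hfree)
  obtain ⟨ξ, hξ⟩ := DFunLike.ne_iff.1 <| (map_ne_zero_iff _ hpair).2 he
  have h2ξ : T.pair X r (2 • e.cls X V) ξ ≠ 0 := by simpa using hξ
  have hvanish : T.cmap (⟨Subtype.val, continuous_subtype_val⟩ :
      C(↥(singularSet V.toVB V.toVB L)ᶜ, X)) r (2 • e.cls X V) = 0 := by
    rw [two_nsmul, map_add, add_eq_zero_iff_eq_neg, ← map_neg, ← hrev V.neg.isOri]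
    exact e.cmap_cls_eq_cmap_cls_neg hL hLrev _ fun y => not_not.1 y.2
  exact T.le_covDim_of_hmap_ne_zero hor hL.isClosed_singularSet hrn
    (T.hmap_ne_zero_of_pair_ne_zero hvanish h2ξ)
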